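/- Let A be an n×n real symmetric matrix and B an m×m real symmetric matrix, and let C = A ⊗ I_m + I_n ⊗ B be the adjacency matrix of the Cartesian product (Kronecker sum). Then for all real t and all indices u, v, the factorization |exp(itC)_{(u,v),(u,v)}| = |exp(itA)_{u,u}| · |exp(itB)_{v,v}| holds, and consequently the vertex (u,v) is sedentary for C if and only if u is sedentary for A and v is sedentary for B; that is, inf_{t>0} |exp(itC)_{(u,v),(u,v)}| > 0 if and only if inf_{t>0} |exp(itA)_{u,u}| > 0 and inf_{t>0} |exp(itB)_{v,v}| > 0. -/

import Mathlib

open Matrix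
open scoped Kronecker

/-- Transition matrix `U(t) = exp(itA)` of the continuous-time quantum walk on the
weighted graph with real symmetric adjacency matrix `A`. -/
noncomputable def transition {m : Type*} [Fintype m] [DecidableEq m]
    (A : Matrix m m ℝ) (t : ℝ) : Matrix m m ℂ :=
  NormedSpace.exp ((Complex.I * t) • A.map (fun x : ℝ => (x : ℂ)))

/-- A vertex `u` is sedentary if `inf_{t>0} |U(t)_{u,u}| > 0`. -/
noncomputable def Sedentary {m : Type*} [Fintype m] [DecidableEq m]
    (A : Matrix m m ℝ) (u : m) : Prop :=
  0 < ⨅ t : {t : ℝ // 0 < t}, ‖transition A t u u‖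

/-- `E` is the orthogonal spectral projection of `A` for the eigenvalue `θ`:
`E` is real symmetric, idempotent, and for every vector `v`, `A·v = θ·v ↔ E·v = v`. -/
def IsSpectralProj {m : Type*} [Fintype m] [DecidableEq m]
    (A : Matrix m m ℝ) (θ : ℝ) (E : Matrix m m ℝ) : Prop :=
  E.IsSymm ∧ E * E = E ∧ ∀ v : m → ℝ, A.mulVec v = θ • v ↔ E.mulVec v = v

/-!
Since `A ⊗ I` and `I ⊗ B` commute, `exp(itC) = exp(itA) ⊗ exp(itB)`, so the diagonal entries of
the transition matrices factor. The transition matrices are unitary, so the factors have modulus at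
most one, and for two functions with values in `[0, 1]` the infimum of the product is positive
exactly when both infima are.
-/

open NormedSpace

namespace Matrix

variable {𝕜 : Type*} [RCLike 𝕜] {n m : Type*} [Fintype n] [DecidableEq n] [Fintype m]
  [DecidableEq m]

open scoped Norms.Operator in
theorem map_exp_of_continuous {k : Type*} [Fintype k] [DecidableEq k] {F : Type*}
    [FunLike F (Matrix n n 𝕜) (Matrix k k 𝕜)] [RingHomClass F (Matrix n n 𝕜) (Matrix k k 𝕜)]
    (f : F) (hf : Continuous f) (X : Matrix n n 𝕜) :
    f (exp X) = exp (f X) :=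
  NormedSpace.map_exp f hf X

theorem exp_kronecker_one (X : Matrix n n 𝕜) :
    exp (X ⊗ₖ (1 : Matrix m m 𝕜)) = exp X ⊗ₖ (1 : Matrix m m 𝕜) := by
  simp only [kronecker_one]
  exact (map_exp_of_continuous ((blockDiagonalRingHom n m 𝕜).comp (Pi.constRingHom m _))
    (continuous_pi fun _ => continuous_id).matrix_blockDiagonal X).symm

theorem exp_one_kronecker (Y : Matrix m m 𝕜) :
    exp ((1 : Matrix n n 𝕜) ⊗ₖ Y) = (1 : Matrix n n 𝕜) ⊗ₖ exp Y := by
  simp only [one_kronecker, ← kronecker_one, ← exp_kronecker_one]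
  exact (map_exp_of_continuous (reindexAlgEquiv ℚ 𝕜 (Equiv.prodComm m n))
    (continuous_id.matrix_reindex _ _) _).symm

theorem exp_kronecker_add_kronecker (X : Matrix n n 𝕜) (Y : Matrix m m 𝕜) :
    exp (X ⊗ₖ (1 : Matrix m m 𝕜) + (1 : Matrix n n 𝕜) ⊗ₖ Y) = exp X ⊗ₖ exp Y := by
  have hcomm : Commute (X ⊗ₖ (1 : Matrix m m 𝕜)) ((1 : Matrix n n 𝕜) ⊗ₖ Y) := by
    simp only [Commute, SemiconjBy, ← mul_kronecker_mul, one_mul, mul_one]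
  rw [exp_add_of_commute _ _ hcomm, exp_kronecker_one, exp_one_kronecker, ← mul_kronecker_mul,
    mul_one, one_mul]

theorem exp_mem_unitaryGroup {S : Matrix n n 𝕜} (hS : S ∈ skewAdjoint (Matrix n n 𝕜)) :
    exp S ∈ unitaryGroup n 𝕜 := by
  rw [mem_unitaryGroup_iff, star_eq_conjTranspose, ← exp_conjTranspose, ← star_eq_conjTranspose,
    skewAdjoint.mem_iff.mp hS, ← exp_add_of_commute _ _ (Commute.refl S).neg_right,
    add_neg_cancel, exp_zero]

end Matrix

theorem Real.iInf_mul_pos_iff {ι : Type*} [Nonempty ι] {f g : ι → ℝ}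
    (hf₀ : ∀ i, 0 ≤ f i) (hg₀ : ∀ i, 0 ≤ g i) (hf₁ : ∀ i, f i ≤ 1) (hg₁ : ∀ i, g i ≤ 1) :
    0 < ⨅ i, f i * g i ↔ 0 < ⨅ i, f i ∧ 0 < ⨅ i, g i := by
  have hfg : BddBelow (Set.range fun i => f i * g i) :=
    ⟨0, Set.forall_mem_range.mpr fun i => mul_nonneg (hf₀ i) (hg₀ i)⟩
  refine ⟨fun h => ⟨h.trans_le (ciInf_mono hfg fun i => mul_le_of_le_one_right (hf₀ i) (hg₁ i)),
    h.trans_le (ciInf_mono hfg fun i => mul_le_of_le_one_left (hg₀ i) (hf₁ i))⟩, ?_⟩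
  rintro ⟨hf, hg⟩
  refine (mul_pos hf hg).trans_le (le_ciInf fun i => ?_)
  exact mul_le_mul (ciInf_le ⟨0, Set.forall_mem_range.mpr hf₀⟩ i)
    (ciInf_le ⟨0, Set.forall_mem_range.mpr hg₀⟩ i) hg.le (hf₀ i)

section Transition

variable {n m : Type*} [Fintype n] [DecidableEq n] [Fintype m] [DecidableEq m]

theorem transition_kronecker_add_kronecker (A : Matrix n n ℝ) (B : Matrix m m ℝ) (t : ℝ) :
    transition (A ⊗ₖ (1 : Matrix m m ℝ) + (1 : Matrix n n ℝ) ⊗ₖ B) t =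
      transition A t ⊗ₖ transition B t := by
  rw [transition, transition, transition, ← exp_kronecker_add_kronecker]
  congr 1
  ext ⟨i, k⟩ ⟨j, l⟩
  simp only [Matrix.smul_apply, map_apply, Matrix.add_apply, kronecker_apply, one_apply,
    smul_eq_mul]
  split_ifs <;> push_cast <;> ring

theorem transition_mem_unitaryGroup {A : Matrix m m ℝ} (hA : A.IsSymm) (t : ℝ) :
    transition A t ∈ unitaryGroup m ℂ := by
  have hH : (A.map ((↑) : ℝ → ℂ)).IsHermitian :=
    (isHermitian_iff_isSymm.mpr hA).map _ fun x => (Complex.conj_ofReal x).symm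
  have hI : Complex.I * t ∈ skewAdjoint ℂ := by
    simp [skewAdjoint.mem_iff]
  exact exp_mem_unitaryGroup (hH.isSelfAdjoint.smul_mem_skewAdjoint hI)

theorem norm_transition_kronecker_add_kronecker_apply (A : Matrix n n ℝ) (B : Matrix m m ℝ)
    (t : ℝ) (u : n) (v : m) :
    ‖transition (A ⊗ₖ (1 : Matrix m m ℝ) + (1 : Matrix n n ℝ) ⊗ₖ B) t (u, v) (u, v)‖ =
      ‖transition A t u u‖ * ‖transition B t v v‖ := by
  rw [transition_kronecker_add_kronecker, kronecker_apply, norm_mul]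

theorem sedentary_kronecker_add_kronecker_iff {A : Matrix n n ℝ} (hA : A.IsSymm)
    {B : Matrix m m ℝ} (hB : B.IsSymm) (u : n) (v : m) :
    Sedentary (A ⊗ₖ (1 : Matrix m m ℝ) + (1 : Matrix n n ℝ) ⊗ₖ B) (u, v) ↔
      Sedentary A u ∧ Sedentary B v := by
  simp only [Sedentary, norm_transition_kronecker_add_kronecker_apply]
  exact Real.iInf_mul_pos_iff (fun _ => norm_nonneg _) (fun _ => norm_nonneg _)
    (fun t => entry_norm_bound_of_unitary (transition_mem_unitaryGroup hA t) u u)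
    (fun t => entry_norm_bound_of_unitary (transition_mem_unitaryGroup hB t) v v)

end Transition

/-- for the Cartesian product `C = A ⊗ I + I ⊗ B` of weighted graphs with
real symmetric adjacency matrices `A` and `B`, the diagonal entries of the transition
matrix factorize, `|exp(itC)_{(u,v),(u,v)}| = |exp(itA)_{u,u}|·|exp(itB)_{v,v}|`, and
`(u,v)` is sedentary for `C` iff `u` is sedentary for `A` and `v` is sedentary for `B`. -/
theorem stmt19 {n m : ℕ} (A : Matrix (Fin n) (Fin n) ℝ) (hA : A.IsSymm)
    (B : Matrix (Fin m) (Fin m) ℝ) (hB : B.IsSymm) :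
    (∀ (t : ℝ) (u : Fin n) (v : Fin m),
      ‖transition
          (A ⊗ₖ (1 : Matrix (Fin m) (Fin m) ℝ) + (1 : Matrix (Fin n) (Fin n) ℝ) ⊗ₖ B)
          t (u, v) (u, v)‖ =
        ‖transition A t u u‖ * ‖transition B t v v‖) ∧
    (∀ (u : Fin n) (v : Fin m),
      Sedentary (A ⊗ₖ (1 : Matrix (Fin m) (Fin m) ℝ) + (1 : Matrix (Fin n) (Fin n) ℝ) ⊗ₖ B)
          (u, v) ↔
        Sedentary A u ∧ Sedentary B v) :=
  ⟨norm_transition_kronecker_add_kronecker_apply A B, sedentary_kronecker_add_kronecker_iff hA hB⟩
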